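/- arXiv:1611.00843 — 2 statements merged into one kernel-verified Lean document; each statement's English description precedes it below -/
import Mathlib

section
/- Let $S$ be a discrete countable space, $T$ a metric space, $Q, Q_1, Q_2, \dots$ probability measures on $S$ with $(Q_n)$ tight, and $K$ a probability kernel from $S$ to $T$ that is injective when viewed as a map from probability measures on $S$ to probability measures on $T$ (via $Q \mapsto QK$). If $Q_n K \to Q K$ weakly as $n \to \infty$, then $Q_n \to Q$ weakly as $n \to \infty$. -/
/-!
By Prokhorov's theorem the tight sequence `(Q n)` stays in a compact set of probability measures.
On a discrete space `x ↦ ∫ f d(K x)` is bounded and continuous for every bounded continuous `f`,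
so `Q ↦ QK` is continuous for weak convergence; being also injective, it is a homeomorphism
of that compact set onto its image, and `Q n K → Qlim K` pulls back to `Q n → Qlim`.
-/

open MeasureTheory ProbabilityTheory Filter Topology BoundedContinuousFunction

theorem IsCompact.tendsto_of_tendsto_comp_of_injective {X Y ι : Type*} [TopologicalSpace X]
    [TopologicalSpace Y] [T2Space Y] {s : Set X} (hs : IsCompact s) {Φ : X → Y}
    (hΦ : Continuous Φ) (hΦinj : Function.Injective Φ) {l : Filter ι} {u : ι → X}
    (hu : ∀ᶠ i in l, u i ∈ s) {x : X} (h : Tendsto (Φ ∘ u) l (𝓝 (Φ x))) :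
    Tendsto u l (𝓝 x) := by
  refine hs.tendsto_nhds_of_unique_mapClusterPt hu fun y _ hy ↦ hΦinj ?_
  have hΦy : MapClusterPt (Φ y) l (Φ ∘ u) := hy.continuousAt_comp hΦ.continuousAt
  exact eq_of_nhds_neBot (hΦy.neBot.mono (inf_le_inf_left _ h))

lemma isTightMeasureSet_of_forall_exists_isCompact_measure_compl_le_ofReal {X : Type*}
    [TopologicalSpace X] [MeasurableSpace X] {S : Set (Measure X)}
    (h : ∀ ε : ℝ, 0 < ε → ∃ C : Set X, IsCompact C ∧ ∀ μ ∈ S, μ Cᶜ ≤ ENNReal.ofReal ε) :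
    IsTightMeasureSet S := by
  refine isTightMeasureSet_iff_exists_isCompact_measure_compl_le.2 fun ε hε ↦ ?_
  rcases eq_or_ne ε ⊤ with rfl | hε_top
  · exact ⟨∅, isCompact_empty, fun _ _ ↦ le_top⟩
  obtain ⟨C, hC, hCε⟩ := h ε.toReal (ENNReal.toReal_pos hε.ne' hε_top)
  exact ⟨C, hC, fun μ hμ ↦ (hCε μ hμ).trans_eq (ENNReal.ofReal_toReal hε_top)⟩

namespace MeasureTheory

variable {S T : Type*} [MeasurableSpace S] [MeasurableSpace T]

theorem Measure.integral_comp {E : Type*} [NormedAddCommGroup E] [NormedSpace ℝ E]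
    {κ : Kernel S T} {μ : Measure S} {f : T → E} (hf : Integrable f (κ ∘ₘ μ)) :
    ∫ y, f y ∂(κ ∘ₘ μ) = ∫ x, ∫ y, f y ∂κ x ∂μ := by
  rw [Measure.comp_eq_comp_const_apply] at hf ⊢
  exact Kernel.integral_comp hf

namespace ProbabilityMeasure

noncomputable def comp (κ : Kernel S T) [IsMarkovKernel κ] (μ : ProbabilityMeasure S) :
    ProbabilityMeasure T :=
  ⟨κ ∘ₘ μ, inferInstance⟩

variable [TopologicalSpace S] [OpensMeasurableSpace S] [TopologicalSpace T] [OpensMeasurableSpace T]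

theorem continuous_comp (κ : Kernel S T) [IsMarkovKernel κ]
    (hκ : ∀ f : T →ᵇ ℝ, Continuous fun x ↦ ∫ y, f y ∂κ x) : Continuous (comp κ) := by
  refine continuous_iff_continuousAt.2 fun μ ↦ tendsto_iff_forall_integral_tendsto.2 fun f ↦ ?_
  let g : S →ᵇ ℝ := .ofNormedAddCommGroup _ (hκ f) ‖f‖ fun x ↦ f.norm_integral_le_norm (κ x)
  have hg : ∀ ν : ProbabilityMeasure S, ∫ y, f y ∂(comp κ ν) = ∫ x, g x ∂ν := fun ν ↦
    Measure.integral_comp (f.integrable _)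
  simp_rw [hg]
  exact tendsto_iff_forall_integral_tendsto.1 tendsto_id g

end ProbabilityMeasure

end MeasureTheory

theorem weak_convergence_from_injective_kernel_general
    {S : Type*} [TopologicalSpace S] [DiscreteTopology S]
    [MeasurableSpace S] [BorelSpace S]
    {T : Type*} [MetricSpace T] [MeasurableSpace T] [BorelSpace T]
    (K : S → Measure T) (hKmeas : Measurable K)
    (hKprob : ∀ x, IsProbabilityMeasure (K x))
    (Q : ℕ → Measure S) (Qlim : Measure S)
    (hQprob : ∀ n, IsProbabilityMeasure (Q n)) (hQlimprob : IsProbabilityMeasure Qlim)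
    -- tightness of the sequence `(Q n)`
    (htight : ∀ ε : ℝ, 0 < ε → ∃ C : Set S, IsCompact C ∧
      ∀ n, Q n Cᶜ ≤ ENNReal.ofReal ε)
    -- injectivity of `K` on probability measures
    (hinj : ∀ μ ν : Measure S, IsProbabilityMeasure μ → IsProbabilityMeasure ν →
      μ.bind K = ν.bind K → μ = ν)
    -- weak convergence of the pushed-forward measures
    (hconv : ∀ f : BoundedContinuousFunction T ℝ,
      Tendsto (fun n => ∫ y, f y ∂((Q n).bind K)) atTop (𝓝 (∫ y, f y ∂(Qlim.bind K)))) :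
    -- weak convergence of the original measures
    ∀ g : BoundedContinuousFunction S ℝ,
      Tendsto (fun n => ∫ x, g x ∂(Q n)) atTop (𝓝 (∫ x, g x ∂Qlim)) := by
  let κ : Kernel S T := ⟨K, hKmeas⟩
  have : IsMarkovKernel κ := ⟨hKprob⟩
  let P n : ProbabilityMeasure S := ⟨Q n, hQprob n⟩
  let Plim : ProbabilityMeasure S := ⟨Qlim, hQlimprob⟩
  have hcompact : IsCompact (closure (Set.range P)) := by
    refine isCompact_closure_of_isTightMeasureSet
      (isTightMeasureSet_of_forall_exists_isCompact_measure_compl_le_ofReal fun ε hε ↦ ?_)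
    obtain ⟨C, hC, hCε⟩ := htight ε hε
    exact ⟨C, hC, by rintro - ⟨-, ⟨n, rfl⟩, rfl⟩; exact hCε n⟩
  have hcomp_inj : Function.Injective (ProbabilityMeasure.comp κ) := fun μ ν h ↦
    Subtype.ext (hinj μ ν μ.2 ν.2 (congrArg Subtype.val h))
  have hcomp_cont : Continuous (ProbabilityMeasure.comp κ) :=
    ProbabilityMeasure.continuous_comp κ fun _ ↦ continuous_of_discreteTopology
  have hP : Tendsto P atTop (𝓝 Plim) :=
    hcompact.tendsto_of_tendsto_comp_of_injective hcomp_cont hcomp_inj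
      (Eventually.of_forall fun n ↦ subset_closure ⟨n, rfl⟩)
      (ProbabilityMeasure.tendsto_iff_forall_integral_tendsto.2 hconv)
  exact ProbabilityMeasure.tendsto_iff_forall_integral_tendsto.1 hP

/-- Let `S` be a countable discrete space, `T` a metric space, and `K` a probability kernel
from `S` to `T` which is injective as a map from probability measures on `S` to probability
measures on `T` (via `Q ↦ Q.bind K`).  If `(Q n)` is a tight sequence of probability
measures on `S` and `(Q n).bind K → Q∞.bind K` weakly, then `Q n → Q∞` weakly. -/
theorem weak_convergence_from_injective_kernel
    {S : Type*} [TopologicalSpace S] [DiscreteTopology S] [Countable S]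
    [MeasurableSpace S] [BorelSpace S]
    {T : Type*} [MetricSpace T] [MeasurableSpace T] [BorelSpace T]
    (K : S → Measure T) (hKmeas : Measurable K)
    (hKprob : ∀ x, IsProbabilityMeasure (K x))
    (Q : ℕ → Measure S) (Qlim : Measure S)
    (hQprob : ∀ n, IsProbabilityMeasure (Q n)) (hQlimprob : IsProbabilityMeasure Qlim)
    -- tightness of the sequence `(Q n)`
    (htight : ∀ ε : ℝ, 0 < ε → ∃ C : Set S, IsCompact C ∧
      ∀ n, Q n Cᶜ ≤ ENNReal.ofReal ε)
    -- injectivity of `K` on probability measures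
    (hinj : ∀ μ ν : Measure S, IsProbabilityMeasure μ → IsProbabilityMeasure ν →
      μ.bind K = ν.bind K → μ = ν)
    -- weak convergence of the pushed-forward measures
    (hconv : ∀ f : BoundedContinuousFunction T ℝ,
      Tendsto (fun n => ∫ y, f y ∂((Q n).bind K)) atTop (𝓝 (∫ y, f y ∂(Qlim.bind K)))) :
    -- weak convergence of the original measures
    ∀ g : BoundedContinuousFunction S ℝ,
      Tendsto (fun n => ∫ x, g x ∂(Q n)) atTop (𝓝 (∫ x, g x ∂Qlim)) :=
  weak_convergence_from_injective_kernel_general K hKmeas hKprob Q Qlim hQprob hQlimprob htight hinj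
    hconv
end

section
/- Let $\mathcal{W} = (I, S, W)$ be a graphex and $c > 0$, and define the $c$-dilation $\mathcal{W}^c = (c^2 I,\ x \mapsto c S(x/c),\ (x,y) \mapsto W(x/c, y/c))$. If $\Gamma$ is a graphex process generated by $\mathcal{W}$, then the $\frac{1}{c}$-dilation of $\Gamma$ (the pushforward of $\Gamma$ under $(x,y) \mapsto (x/c, y/c)$) is a graphex process generated by $\mathcal{W}^c$. In particular, $\mathrm{uKEG}(\mathcal{W}, s) = \mathrm{uKEG}(\mathcal{W}^c, s/c)$ for all $s \ge 0$. -/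
open MeasureTheory ProbabilityTheory

/-- A point process `N` (a random measure) on `S` is a Poisson point process with intensity
measure `μ` if the counts on finite-intensity measurable sets are Poisson distributed with
mean `μ A`, and the counts on pairwise disjoint sets are independent. -/
def IsPoissonPP {Ω : Type*} [MeasurableSpace Ω] {S : Type*} [MeasurableSpace S]
    (P : Measure Ω) (N : Ω → Measure S) (μ : Measure S) : Prop :=
  (∀ A : Set S, MeasurableSet A → μ A < ⊤ → ∀ n : ℕ,
      (P {ω | N ω A = n}).toReal
        = Real.exp (-(μ A).toReal) * (μ A).toReal ^ n / n.factorial) ∧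
  (∀ (m : ℕ) (A : Fin m → Set S), (∀ i, MeasurableSet (A i)) →
      Pairwise (Function.onFun Disjoint A) →
      iIndepFun (m := fun _ => inferInstance) (fun i ω => N ω (A i)) P)

/-- Lebesgue measure on the nonnegative quadrant of `ℝ²`. -/
noncomputable def quadrant2 : Measure (ℝ × ℝ) :=
  volume.restrict (Set.Ici 0 ×ˢ Set.Ici 0)

/-- Lebesgue measure on the nonnegative octant of `ℝ³`. -/
noncomputable def octant3 : Measure (ℝ × ℝ × ℝ) :=
  volume.restrict (Set.Ici 0 ×ˢ Set.Ici 0 ×ˢ Set.Ici 0)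

/-- The types of the latent variables of a graphex process: index `0` is the main point
process `(θ i, ϑ i)`, index `1` the isolated-edge process `(ρ k, ρ' k, η k)`, index `2`
the edge variables `ζ`, and index `n + 3` the `n`-th star process `(σ n k, χ n k)`. -/
def latentType : ℕ → Type
  | 0 => ℕ → ℝ × ℝ
  | 1 => ℕ → ℝ × ℝ × ℝ
  | 2 => Sym2 ℕ → ℝ
  | _ + 3 => ℕ → ℝ × ℝ

/-- The product measurable structure on each latent component. -/
def latentMS : ∀ n, MeasurableSpace (latentType n)
  | 0 => inferInstanceAs (MeasurableSpace (ℕ → ℝ × ℝ))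
  | 1 => inferInstanceAs (MeasurableSpace (ℕ → ℝ × ℝ × ℝ))
  | 2 => inferInstanceAs (MeasurableSpace (Sym2 ℕ → ℝ))
  | _ + 3 => inferInstanceAs (MeasurableSpace (ℕ → ℝ × ℝ))

/-- The family of all latent variables of a graphex process, as one indexed family. -/
def latentFam {Ω : Type} (θϑ : ℕ → Ω → ℝ × ℝ) (star : ℕ → ℕ → Ω → ℝ × ℝ)
    (iso : ℕ → Ω → ℝ × ℝ × ℝ) (ζ : Sym2 ℕ → Ω → ℝ) : ∀ n, Ω → latentType n
  | 0 => fun ω i => θϑ i ω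
  | 1 => fun ω k => iso k ω
  | 2 => fun ω p => ζ p ω
  | n + 3 => fun ω k => star n k ω

/-- `Γ` is a graphex process generated by the graphex `(I, S, W)`: there are latent
unit-rate Poisson processes (the main process on `ℝ₊²`, one star process on `ℝ₊²` for each
point, and an isolated-edge process on `ℝ₊³`) and i.i.d. uniform edge variables, all
jointly independent, from which `Γ` is built via the Kallenberg representation. -/
def IsGraphexProcess {Ω : Type} [MeasurableSpace Ω] (P : Measure Ω)
    (I : ℝ) (S : ℝ → ℝ) (W : ℝ → ℝ → ℝ) (Γ : Ω → Set (Sym2 ℝ)) : Prop :=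
  ∃ (θϑ : ℕ → Ω → ℝ × ℝ) (star : ℕ → ℕ → Ω → ℝ × ℝ)
    (iso : ℕ → Ω → ℝ × ℝ × ℝ) (ζ : Sym2 ℕ → Ω → ℝ),
    IsPoissonPP P (fun ω => Measure.sum fun i => Measure.dirac (θϑ i ω)) quadrant2 ∧
    (∀ j, IsPoissonPP P
      (fun ω => Measure.sum fun k => Measure.dirac (star j k ω)) quadrant2) ∧
    IsPoissonPP P (fun ω => Measure.sum fun k => Measure.dirac (iso k ω)) octant3 ∧
    (∀ p, Measure.map (ζ p) P = volume.restrict (Set.Icc 0 1)) ∧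
    iIndepFun (m := latentMS) (latentFam θϑ star iso ζ) P ∧
    ∀ ω, Γ ω =
      ({e | ∃ i j : ℕ, i ≠ j ∧ e = Sym2.mk (θϑ i ω).1 (θϑ j ω).1 ∧
          ζ (Sym2.mk i j) ω ≤ W (θϑ i ω).2 (θϑ j ω).2}
        ∪ {e | ∃ j k : ℕ, e = Sym2.mk (θϑ j ω).1 (star j k ω).1 ∧
            (star j k ω).2 ≤ S (θϑ j ω).2}
        ∪ {e | ∃ k : ℕ, e = Sym2.mk (iso k ω).1 (iso k ω).2.1 ∧
            (iso k ω).2.2 ≤ I})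

instance : MeasurableSpace (Set (Sym2 ℝ)) := ⊤

/-- Unlabeled graphs: labeled graphs (edge sets over real labels) up to relabeling. -/
abbrev UGraph : Type := Quot fun E E' : Set (Sym2 ℝ) => ∃ g : ℝ ≃ ℝ, (Sym2.map g) '' E = E'

/-- The restriction of a labeled graph to vertices with labels at most `t`. -/
def restrictGraph (E : Set (Sym2 ℝ)) (t : ℝ) : Set (Sym2 ℝ) := {e ∈ E | ∀ x ∈ e, x ≤ t}

/-! The `1/c`-dilation of labels together with the `c`-scaling of marks preserves each
Lebesgue intensity (`(θ, ϑ) ↦ (θ/c, cϑ)` and `(ρ, ρ', η) ↦ (ρ/c, ρ'/c, c²η)` have Jacobian `1`),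
so it carries the latent unit-rate Poisson processes of `Γ` to unit-rate Poisson processes,
keeps them independent, and turns the Kallenberg construction for `(I, S, W)` into the one for
the dilated graphex. Since `x ↦ x / c` is an order isomorphism, the restriction of `Γ` to labels
`≤ s` is a relabeling of the restriction of the dilated graph to labels `≤ s / c`. -/

open Set

section LebesgueScaling

lemma map_mul_left_volume_Ici {a : ℝ} (ha : 0 < a) :
    (volume.restrict (Ici (0:ℝ))).map (a * ·) = ENNReal.ofReal a⁻¹ • volume.restrict (Ici 0) := by
  have hpre : (a * ·) ⁻¹' Ici (0:ℝ) = Ici 0 := by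
    ext x; simp [mul_nonneg_iff_of_pos_left ha]
  conv_lhs => rw [← hpre]
  rw [← Measure.restrict_map (by fun_prop) measurableSet_Ici,
    Real.map_volume_mul_left ha.ne', abs_of_pos (inv_pos.2 ha), Measure.restrict_smul]

lemma quadrant2_eq_prod :
    quadrant2 = (volume.restrict (Ici (0:ℝ))).prod (volume.restrict (Ici 0)) := by
  rw [quadrant2, Measure.volume_eq_prod, Measure.prod_restrict]

lemma octant3_eq_prod : octant3 = (volume.restrict (Ici (0:ℝ))).prod
    ((volume.restrict (Ici (0:ℝ))).prod (volume.restrict (Ici 0))) := by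
  rw [octant3, Measure.volume_eq_prod, Measure.volume_eq_prod, Measure.prod_restrict,
    Measure.prod_restrict]

lemma measurePreserving_quadrant2 {a b : ℝ} (ha : 0 < a) (hb : 0 < b) (hab : a * b = 1) :
    MeasurePreserving (Prod.map (a * ·) (b * ·)) quadrant2 quadrant2 := by
  refine ⟨by fun_prop, ?_⟩
  rw [quadrant2_eq_prod, ← Measure.map_prod_map _ _ (by fun_prop) (by fun_prop),
    map_mul_left_volume_Ici ha, map_mul_left_volume_Ici hb, Measure.prod_smul_left,
    Measure.prod_smul_right, smul_smul, ← ENNReal.ofReal_mul (by positivity), ← mul_inv, hab,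
    inv_one, ENNReal.ofReal_one, one_smul]

lemma measurePreserving_octant3 {a b d : ℝ} (ha : 0 < a) (hb : 0 < b) (hd : 0 < d)
    (habd : a * (b * d) = 1) :
    MeasurePreserving (Prod.map (a * ·) (Prod.map (b * ·) (d * ·))) octant3 octant3 := by
  have hscalar : ENNReal.ofReal a⁻¹ * (ENNReal.ofReal b⁻¹ * ENNReal.ofReal d⁻¹) = 1 := by
    rw [← ENNReal.ofReal_mul (inv_nonneg.2 hb.le), ← ENNReal.ofReal_mul (inv_nonneg.2 ha.le),
      ← mul_inv, ← mul_inv, habd, inv_one, ENNReal.ofReal_one]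
  refine ⟨by fun_prop, ?_⟩
  rw [octant3_eq_prod, ← Measure.map_prod_map _ _ (by fun_prop) (by fun_prop),
    ← Measure.map_prod_map _ _ (by fun_prop) (by fun_prop),
    map_mul_left_volume_Ici ha, map_mul_left_volume_Ici hb, map_mul_left_volume_Ici hd]
  simp only [Measure.prod_smul_left, Measure.prod_smul_right, smul_smul]
  convert one_smul ENNReal _ using 2
  rw [← hscalar]
  ring

end LebesgueScaling

lemma IsPoissonPP.map {Ω : Type*} [MeasurableSpace Ω] {X Y : Type*} [MeasurableSpace X]
    [MeasurableSpace Y] {P : Measure Ω} {N : Ω → Measure X} {μ : Measure X} {ν : Measure Y}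
    {T : X → Y} (h : IsPoissonPP P N μ) (hT : MeasurePreserving T μ ν) :
    IsPoissonPP P (fun ω => (N ω).map T) ν := by
  have hcount : ∀ ω {A : Set Y}, MeasurableSet A → (N ω).map T A = N ω (T ⁻¹' A) :=
    fun ω A hA => Measure.map_apply hT.measurable hA
  refine ⟨fun A hA hνA n => ?_, fun m A hA hdisj => ?_⟩
  · have hμA : μ (T ⁻¹' A) = ν A := hT.measure_preimage hA.nullMeasurableSet
    simp only [hcount _ hA, ← hμA]
    exact h.1 _ (hT.measurable hA) (hμA ▸ hνA) n
  · simp only [hcount _ (hA _)]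
    exact h.2 m _ (fun i => hT.measurable (hA i)) fun i j hij => (hdisj hij).preimage T

lemma MeasureTheory.Measure.sum_dirac_comp {X Y ι : Type*} [MeasurableSpace X]
    [MeasurableSpace Y] {T : X → Y} (hT : Measurable T) (x : ι → X) :
    (Measure.sum fun i => Measure.dirac (T (x i))) =
      (Measure.sum fun i => Measure.dirac (x i)).map T := by
  rw [Measure.map_sum hT.aemeasurable]
  simp only [Measure.map_dirac' hT]

lemma IsPoissonPP.comp_points {Ω : Type*} [MeasurableSpace Ω] {X Y ι : Type*}
    [MeasurableSpace X] [MeasurableSpace Y] {P : Measure Ω} {x : ι → Ω → X} {μ : Measure X}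
    {ν : Measure Y} {T : X → Y}
    (h : IsPoissonPP P (fun ω => Measure.sum fun i => Measure.dirac (x i ω)) μ)
    (hT : MeasurePreserving T μ ν) :
    IsPoissonPP P (fun ω => Measure.sum fun i => Measure.dirac (T (x i ω))) ν := by
  simpa only [Measure.sum_dirac_comp hT.measurable] using h.map hT

section LatentVariables

variable {Ω : Type} (T₂ : ℝ × ℝ → ℝ × ℝ) (T₃ : ℝ × ℝ × ℝ → ℝ × ℝ × ℝ)

def latentMap : ∀ n, latentType n → latentType n
  | 0 => fun h i => T₂ (h i)
  | 1 => fun h k => T₃ (h k)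
  | 2 => id
  | _ + 3 => fun h k => T₂ (h k)

variable {T₂ T₃}

lemma measurable_latentMap (hT₂ : Measurable T₂) (hT₃ : Measurable T₃) (n : ℕ) :
    Measurable[latentMS n, latentMS n] (latentMap T₂ T₃ n) :=
  match n with
  | 0 => measurable_pi_lambda (fun (h : ℕ → ℝ × ℝ) i => T₂ (h i)) fun i =>
      hT₂.comp (measurable_pi_apply i)
  | 1 => measurable_pi_lambda (fun (h : ℕ → ℝ × ℝ × ℝ) i => T₃ (h i)) fun i =>
      hT₃.comp (measurable_pi_apply i)
  | 2 => measurable_id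
  | _ + 3 => measurable_pi_lambda (fun (h : ℕ → ℝ × ℝ) i => T₂ (h i)) fun i =>
      hT₂.comp (measurable_pi_apply i)

lemma iIndepFun_latentFam_map [MeasurableSpace Ω] {P : Measure Ω} {θϑ : ℕ → Ω → ℝ × ℝ}
    {star : ℕ → ℕ → Ω → ℝ × ℝ} {iso : ℕ → Ω → ℝ × ℝ × ℝ} {ζ : Sym2 ℕ → Ω → ℝ}
    (hT₂ : Measurable T₂) (hT₃ : Measurable T₃)
    (h : iIndepFun (m := latentMS) (latentFam θϑ star iso ζ) P) :
    iIndepFun (m := latentMS) (latentFam (fun i ω => T₂ (θϑ i ω))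
      (fun j k ω => T₂ (star j k ω)) (fun k ω => T₃ (iso k ω)) ζ) P := by
  have hfam : (fun n => latentMap T₂ T₃ n ∘ latentFam θϑ star iso ζ n) =
      latentFam (fun i ω => T₂ (θϑ i ω)) (fun j k ω => T₂ (star j k ω))
        (fun k ω => T₃ (iso k ω)) ζ := by
    funext n
    rcases n with _ | _ | _ | n <;> rfl
  exact hfam ▸ h.comp _ (measurable_latentMap hT₂ hT₃)

end LatentVariables

section Kallenberg

def kallenbergEdges (I : ℝ) (S : ℝ → ℝ) (W : ℝ → ℝ → ℝ) (θϑ : ℕ → ℝ × ℝ)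
    (star : ℕ → ℕ → ℝ × ℝ) (iso : ℕ → ℝ × ℝ × ℝ) (ζ : Sym2 ℕ → ℝ) : Set (Sym2 ℝ) :=
  {e | ∃ i j : ℕ, i ≠ j ∧ e = Sym2.mk (θϑ i).1 (θϑ j).1 ∧ ζ (Sym2.mk i j) ≤ W (θϑ i).2 (θϑ j).2}
    ∪ {e | ∃ j k : ℕ, e = Sym2.mk (θϑ j).1 (star j k).1 ∧ (star j k).2 ≤ S (θϑ j).2}
    ∪ {e | ∃ k : ℕ, e = Sym2.mk (iso k).1 (iso k).2.1 ∧ (iso k).2.2 ≤ I}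

variable (I : ℝ) (S : ℝ → ℝ) (W : ℝ → ℝ → ℝ) (θϑ : ℕ → ℝ × ℝ) (star : ℕ → ℕ → ℝ × ℝ)
  (iso : ℕ → ℝ × ℝ × ℝ) (ζ : Sym2 ℕ → ℝ)

lemma image_sym2Map_kallenbergEdges (f : ℝ → ℝ) :
    Sym2.map f '' kallenbergEdges I S W θϑ star iso ζ =
      kallenbergEdges I S W (fun i => (f (θϑ i).1, (θϑ i).2))
        (fun j k => (f (star j k).1, (star j k).2))
        (fun k => (f (iso k).1, f (iso k).2.1, (iso k).2.2)) ζ := by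
  simp only [kallenbergEdges, image_union]
  refine congrArg₂ (· ∪ ·) (congrArg₂ (· ∪ ·) ?_ ?_) ?_ <;> ext e
  · constructor
    · rintro ⟨_, ⟨i, j, hij, rfl, hW⟩, rfl⟩
      exact ⟨i, j, hij, Sym2.map_mk _ _ _, hW⟩
    · rintro ⟨i, j, hij, rfl, hW⟩
      exact ⟨_, ⟨i, j, hij, rfl, hW⟩, Sym2.map_mk _ _ _⟩
  · constructor
    · rintro ⟨_, ⟨j, k, rfl, hS⟩, rfl⟩
      exact ⟨j, k, Sym2.map_mk _ _ _, hS⟩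
    · rintro ⟨j, k, rfl, hS⟩
      exact ⟨_, ⟨j, k, rfl, hS⟩, Sym2.map_mk _ _ _⟩
  · constructor
    · rintro ⟨_, ⟨k, rfl, hI⟩, rfl⟩
      exact ⟨k, Sym2.map_mk _ _ _, hI⟩
    · rintro ⟨k, rfl, hI⟩
      exact ⟨_, ⟨k, rfl, hI⟩, Sym2.map_mk _ _ _⟩

lemma kallenbergEdges_dilate {c : ℝ} (hc : 0 < c) :
    kallenbergEdges (c ^ 2 * I) (fun x => c * S (x / c)) (fun x y => W (x / c) (y / c))
        (fun i => ((θϑ i).1, c * (θϑ i).2)) (fun j k => ((star j k).1, c * (star j k).2))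
        (fun k => ((iso k).1, (iso k).2.1, c ^ 2 * (iso k).2.2)) ζ =
      kallenbergEdges I S W θϑ star iso ζ := by
  simp only [kallenbergEdges, mul_div_cancel_left₀ _ hc.ne', mul_le_mul_iff_of_pos_left hc,
    mul_le_mul_iff_of_pos_left (pow_pos hc 2)]

end Kallenberg

lemma image_sym2Map_restrictGraph (f : ℝ ≃o ℝ) (E : Set (Sym2 ℝ)) (t : ℝ) :
    Sym2.map f '' restrictGraph E t = restrictGraph (Sym2.map f '' E) (f t) := by
  ext e
  constructor
  · rintro ⟨e, ⟨he, hle⟩, rfl⟩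
    refine ⟨⟨e, he, rfl⟩, fun x hx => ?_⟩
    obtain ⟨y, hy, rfl⟩ := Sym2.mem_map.1 hx
    exact f.le_iff_le.2 (hle y hy)
  · rintro ⟨⟨e, he, rfl⟩, hle⟩
    exact ⟨e, ⟨he, fun x hx => f.le_iff_le.1 (hle _ (Sym2.mem_map.2 ⟨x, hx, rfl⟩))⟩, rfl⟩

lemma UGraph.mk_image_sym2Map (g : ℝ ≃ ℝ) (E : Set (Sym2 ℝ)) :
    (Quot.mk _ (Sym2.map g '' E) : UGraph) = Quot.mk _ E :=
  (Quot.sound ⟨g, rfl⟩).symm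

theorem graphex_process_dilation_general
    {Ω : Type} [MeasurableSpace Ω] (P : Measure Ω)
    (I : ℝ) (S : ℝ → ℝ) (W : ℝ → ℝ → ℝ)
    (Γ : Ω → Set (Sym2 ℝ)) (hΓ : IsGraphexProcess P I S W Γ)
    (c : ℝ) (hc : 0 < c) :
    IsGraphexProcess P (c ^ 2 * I) (fun x => c * S (x / c)) (fun x y => W (x / c) (y / c))
        (fun ω => (Sym2.map fun x => x / c) '' Γ ω) ∧
      ∀ s : ℝ, 0 ≤ s → ∀ A : Set UGraph,
        P ((fun ω => Quot.mk _ (restrictGraph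
            ((Sym2.map fun x => x / c) '' Γ ω) (s / c))) ⁻¹' A)
          = P ((fun ω => Quot.mk _ (restrictGraph (Γ ω) s)) ⁻¹' A) := by
  obtain ⟨θϑ, star, iso, ζ, hθϑ, hstar, hiso, hζ, hindep, hΓω⟩ := hΓ
  have hT₂ : MeasurePreserving (Prod.map (· / c) (c * ·)) quadrant2 quadrant2 := by
    simpa only [div_eq_inv_mul] using
      measurePreserving_quadrant2 (inv_pos.2 hc) hc (inv_mul_cancel₀ hc.ne')
  have hT₃ : MeasurePreserving (Prod.map (· / c) (Prod.map (· / c) (c ^ 2 * ·))) octant3 octant3 := by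
    simpa only [div_eq_inv_mul] using measurePreserving_octant3 (inv_pos.2 hc) (inv_pos.2 hc)
      (pow_pos hc 2) (by field_simp)
  refine ⟨⟨_, _, _, ζ, hθϑ.comp_points hT₂, fun j => (hstar j).comp_points hT₂,
    hiso.comp_points hT₃, hζ, iIndepFun_latentFam_map hT₂.measurable hT₃.measurable hindep,
    fun ω => ?_⟩, fun s _ A => ?_⟩
  · have hΓk : Γ ω = kallenbergEdges I S W (θϑ · ω) (star · · ω) (iso · ω) (ζ · ω) := hΓω ω
    beta_reduce
    rw [hΓk, image_sym2Map_kallenbergEdges, ← kallenbergEdges_dilate _ _ _ _ _ _ _ hc]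
    rfl
  · have hunlabeled : ∀ E, (Quot.mk _ (restrictGraph ((Sym2.map fun x => x / c) '' E) (s / c)) :
        UGraph) = Quot.mk _ (restrictGraph E s) := fun E =>
      (congrArg _ (image_sym2Map_restrictGraph (OrderIso.divRight₀ c hc) E s)).symm.trans
        (UGraph.mk_image_sym2Map (OrderIso.divRight₀ c hc).toEquiv _)
    simp only [hunlabeled]

/-- Dilation of graphex processes: if `Γ` is a graphex process generated by the graphex
`(I, S, W)` and `c > 0`, then the `1/c`-dilation of `Γ` (pushforward of the labels under
`x ↦ x / c`) is a graphex process generated by the `c`-dilation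
`(c² I, x ↦ c • S(x/c), (x,y) ↦ W(x/c, y/c))`.  In particular the unlabeled graph of the
dilated process at size `s / c` has the same law as that of `Γ` at size `s`. -/
theorem graphex_process_dilation
    {Ω : Type} [MeasurableSpace Ω] (P : Measure Ω) [IsProbabilityMeasure P]
    (I : ℝ) (S : ℝ → ℝ) (W : ℝ → ℝ → ℝ)
    (hI : 0 ≤ I) (hS0 : ∀ x, 0 ≤ S x)
    (hSint : ∫⁻ x in Set.Ici (0:ℝ), ENNReal.ofReal (S x) < ⊤)
    (hWrange : ∀ x y, W x y ∈ Set.Icc (0:ℝ) 1) (hWsym : ∀ x y, W x y = W y x)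
    (hWmeas : Measurable (Function.uncurry W))
    -- graphex integrability conditions on `W`, with `μW x = ∫ W (x, ·)`
    (hW1 : volume {x ∈ Set.Ici (0:ℝ) |
      (∫⁻ y in Set.Ici (0:ℝ), ENNReal.ofReal (W x y)) = ⊤} = 0)
    (hW2 : volume {x ∈ Set.Ici (0:ℝ) |
      1 < ∫⁻ y in Set.Ici (0:ℝ), ENNReal.ofReal (W x y)} < ⊤)
    (hW3 : ∫⁻ x in Set.Ici (0:ℝ), ∫⁻ y in Set.Ici (0:ℝ),
      (ENNReal.ofReal (W x y)
        * Set.indicator {x | (∫⁻ z in Set.Ici (0:ℝ), ENNReal.ofReal (W x z)) ≤ 1} 1 x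
        * Set.indicator {y | (∫⁻ z in Set.Ici (0:ℝ), ENNReal.ofReal (W y z)) ≤ 1} 1 y) < ⊤)
    (hW4 : ∫⁻ x in Set.Ici (0:ℝ), ENNReal.ofReal (W x x) < ⊤)
    (Γ : Ω → Set (Sym2 ℝ)) (hΓ : IsGraphexProcess P I S W Γ)
    (c : ℝ) (hc : 0 < c) :
    IsGraphexProcess P (c ^ 2 * I) (fun x => c * S (x / c)) (fun x y => W (x / c) (y / c))
        (fun ω => (Sym2.map fun x => x / c) '' Γ ω) ∧
      ∀ s : ℝ, 0 ≤ s → ∀ A : Set UGraph,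
        P ((fun ω => Quot.mk _ (restrictGraph
            ((Sym2.map fun x => x / c) '' Γ ω) (s / c))) ⁻¹' A)
          = P ((fun ω => Quot.mk _ (restrictGraph (Γ ω) s)) ⁻¹' A) :=
  graphex_process_dilation_general P I S W Γ hΓ c hc
end
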